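/- arXiv:1907.11400 — 3 statements merged into one kernel-verified Lean document; each statement's English description precedes it below -/
import Mathlib

section
/- The algebra over R = Z[q^{±1/2}] generated by a,b,c,d subject to the two matrix relations C = A^t C A and C = A C A^t, where A is the 2×2 matrix with entries a,b,c,d and C is the 2×2 matrix with entries C(+,+)=0, C(+,-)=q^{-1/2}, C(-,+)=-q^{-5/2}, C(-,-)=0, is isomorphic as an algebra to O_{q^2}(SL(2)). -/
noncomputable section

open LaurentPolynomial TensorProduct

/-- The ground ring `R = ℤ[q^{±1/2}]`, with `q^{1/2} = T 1`. -/
abbrev R : Type := LaurentPolynomial ℤ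

abbrev F : Type := FreeAlgebra R (Fin 4)

/-- generator `a` of the free algebra -/
def ja : F := FreeAlgebra.ι R (0 : Fin 4)
/-- generator `b` -/
def jb : F := FreeAlgebra.ι R (1 : Fin 4)
/-- generator `c` -/
def jc : F := FreeAlgebra.ι R (2 : Fin 4)
/-- generator `d` -/
def jd : F := FreeAlgebra.ι R (3 : Fin 4)

/-- the scalar `q^{n/2}` in the free algebra (`q^{1/2} = T 1`). -/
def fs (n : ℤ) : F := algebraMap R F (T n)

/-- Defining relations of `O_{q²}(SL₂)`: `ca = q²ac`, `db = q²bd`, `ba = q²ab`,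
`dc = q²cd`, `bc = cb`, `ad - q⁻²bc = 1`, `da - q²cb = 1`, where `q² = T 4`. -/
inductive OqRel : F → F → Prop
  | ca : OqRel (jc * ja) (fs 4 * (ja * jc))
  | db : OqRel (jd * jb) (fs 4 * (jb * jd))
  | ba : OqRel (jb * ja) (fs 4 * (ja * jb))
  | dc : OqRel (jd * jc) (fs 4 * (jc * jd))
  | bc : OqRel (jb * jc) (jc * jb)
  | det1 : OqRel (ja * jd - fs (-4) * (jb * jc)) 1
  | det2 : OqRel (jd * ja - fs 4 * (jc * jb)) 1

/-- The quantum coordinate ring `O_{q²}(SL₂)`. -/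
abbrev Oq : Type := RingQuot OqRel

def ga : Oq := RingQuot.mkAlgHom R OqRel ja
def gb : Oq := RingQuot.mkAlgHom R OqRel jb
def gc : Oq := RingQuot.mkAlgHom R OqRel jc
def gd : Oq := RingQuot.mkAlgHom R OqRel jd

/-- the scalar `q^{n/2}` in `O_{q²}(SL₂)`. -/
def os (n : ℤ) : Oq := algebraMap R Oq (T n)

/-- The relations `C = AᵗCA` and `C = ACAᵗ`, written out as scalar equations, where
`A = [[a,b],[c,d]]` and `C = [[0, q^{-1/2}],[-q^{-5/2}, 0]]`.
(`q^{-1/2} = T (-1)`, `q^{-5/2} = T (-5)`.) -/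
inductive MRel : F → F → Prop
  -- the four entries of `C = AᵗCA`
  | r1pp : MRel (fs (-1) * (ja * jc) - fs (-5) * (jc * ja)) 0
  | r1pm : MRel (fs (-1) * (ja * jd) - fs (-5) * (jc * jb)) (fs (-1))
  | r1mp : MRel (fs (-1) * (jb * jc) - fs (-5) * (jd * ja)) (-(fs (-5)))
  | r1mm : MRel (fs (-1) * (jb * jd) - fs (-5) * (jd * jb)) 0
  -- the four entries of `C = ACAᵗ`
  | r2pp : MRel (fs (-1) * (ja * jb) - fs (-5) * (jb * ja)) 0
  | r2pm : MRel (fs (-1) * (ja * jd) - fs (-5) * (jb * jc)) (fs (-1))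
  | r2mp : MRel (fs (-1) * (jc * jb) - fs (-5) * (jd * ja)) (-(fs (-5)))
  | r2mm : MRel (fs (-1) * (jc * jd) - fs (-5) * (jd * jc)) 0

abbrev MAlg : Type := RingQuot MRel

def ma : MAlg := RingQuot.mkAlgHom R MRel ja
def mb : MAlg := RingQuot.mkAlgHom R MRel jb
def mc : MAlg := RingQuot.mkAlgHom R MRel jc
def md : MAlg := RingQuot.mkAlgHom R MRel jd

/-!
Clearing the powers of `q^{1/2}`, the diagonal entries of `AᵗCA = C` say `ca = q²ac` and
`db = q²bd`, those of `ACAᵗ = C` say `ba = q²ab` and `dc = q²cd`, the two `(+,-)` entries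
together force `bc = cb`, and the off-diagonal entries of `ACAᵗ = C` are the two quantum
determinant relations. Conversely every matrix entry follows from the relations of
`O_{q²}(SL₂)`. So each set of relations holds among the generators of the other quotient of
the free algebra, and the two quotients are isomorphic.
-/

namespace RingQuot

variable {S A : Type*} [CommSemiring S] [Semiring A] [Algebra S A] {r s : A → A → Prop}

def algEquivOfRel (hrs : ∀ ⦃x y⦄, r x y → mkAlgHom S s x = mkAlgHom S s y)
    (hsr : ∀ ⦃x y⦄, s x y → mkAlgHom S r x = mkAlgHom S r y) :
    RingQuot r ≃ₐ[S] RingQuot s :=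
  AlgEquiv.ofAlgHom (liftAlgHom S ⟨mkAlgHom S s, hrs⟩) (liftAlgHom S ⟨mkAlgHom S r, hsr⟩)
    (ringQuot_ext' (S := S) _ _ <| AlgHom.ext fun _ => by simp)
    (ringQuot_ext' (S := S) _ _ <| AlgHom.ext fun _ => by simp)

@[simp]
theorem algEquivOfRel_mkAlgHom (hrs : ∀ ⦃x y⦄, r x y → mkAlgHom S s x = mkAlgHom S s y)
    (hsr : ∀ ⦃x y⦄, s x y → mkAlgHom S r x = mkAlgHom S r y) (x : A) :
    algEquivOfRel hrs hsr (mkAlgHom S r x) = mkAlgHom S s x :=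
  liftAlgHom_mkAlgHom_apply S _ _ _

end RingQuot

section Relations

variable {A : Type*} [Ring A] [Algebra R A]

local notation "𝐪" => (T : ℤ → R)

theorem T_smul_T_smul (m n : ℤ) (x : A) : 𝐪 m • 𝐪 n • x = 𝐪 (m + n) • x := by
  rw [smul_smul, T_add]

theorem T_smul_injective (n : ℤ) : Function.Injective fun x : A => 𝐪 n • x := by
  intro x y h
  simpa [T_smul_T_smul, T_zero] using congrArg (𝐪 (-n) • ·) h

structure OqSL2Relations (a b c d : A) : Prop where
  ca : c * a = 𝐪 4 • (a * c)
  db : d * b = 𝐪 4 • (b * d)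
  ba : b * a = 𝐪 4 • (a * b)
  dc : d * c = 𝐪 4 • (c * d)
  bc : b * c = c * b
  det1 : a * d - 𝐪 (-4) • (b * c) = 1
  det2 : d * a - 𝐪 4 • (c * b) = 1

structure MatrixRelations (a b c d : A) : Prop where
  r1pp : 𝐪 (-1) • (a * c) - 𝐪 (-5) • (c * a) = 0
  r1pm : 𝐪 (-1) • (a * d) - 𝐪 (-5) • (c * b) = 𝐪 (-1) • 1
  r1mp : 𝐪 (-1) • (b * c) - 𝐪 (-5) • (d * a) = -(𝐪 (-5) • 1)
  r1mm : 𝐪 (-1) • (b * d) - 𝐪 (-5) • (d * b) = 0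
  r2pp : 𝐪 (-1) • (a * b) - 𝐪 (-5) • (b * a) = 0
  r2pm : 𝐪 (-1) • (a * d) - 𝐪 (-5) • (b * c) = 𝐪 (-1) • 1
  r2mp : 𝐪 (-1) • (c * b) - 𝐪 (-5) • (d * a) = -(𝐪 (-5) • 1)
  r2mm : 𝐪 (-1) • (c * d) - 𝐪 (-5) • (d * c) = 0

theorem matrixRelations_iff_oqSL2Relations {a b c d : A} :
    MatrixRelations a b c d ↔ OqSL2Relations a b c d := by
  constructor
  · intro h
    have rescale {x y : A} {m n : ℤ} (hxy : 𝐪 m • x - 𝐪 n • y = 0) : y = 𝐪 (m - n) • x :=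
      T_smul_injective n <| by simpa [T_smul_T_smul] using (sub_eq_zero.1 hxy).symm
    refine ⟨by simpa using rescale h.r1pp, by simpa using rescale h.r1mm,
      by simpa using rescale h.r2pp, by simpa using rescale h.r2mm, ?bc, ?det1, ?det2⟩
    case bc =>
      exact (T_smul_injective (-5) (sub_right_inj.1 (h.r1pm.trans h.r2pm.symm))).symm
    case det1 =>
      apply T_smul_injective (-1)
      simpa [smul_sub, T_smul_T_smul] using h.r2pm
    case det2 =>
      apply T_smul_injective (-5)
      simp only [smul_sub, T_smul_T_smul]
      norm_num
      rw [← neg_sub, h.r2mp, neg_neg]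
  · intro h
    have had : a * d = 1 + 𝐪 (-4) • (b * c) := by rw [← h.det1]; abel
    have hda : d * a = 1 + 𝐪 4 • (c * b) := by rw [← h.det2]; abel
    constructor
    · rw [h.ca, T_smul_T_smul]; norm_num
    · rw [had, h.bc, smul_add, T_smul_T_smul]; norm_num
    · rw [hda, h.bc, smul_add, T_smul_T_smul]; norm_num
    · rw [h.db, T_smul_T_smul]; norm_num
    · rw [h.ba, T_smul_T_smul]; norm_num
    · rw [had, smul_add, T_smul_T_smul]; norm_num
    · rw [hda, smul_add, T_smul_T_smul]; norm_num
    · rw [h.dc, T_smul_T_smul]; norm_num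

theorem map_fs (f : F →ₐ[R] A) (n : ℤ) : f (fs n) = 𝐪 n • 1 := by
  rw [fs, AlgHom.commutes, Algebra.algebraMap_eq_smul_one]

theorem respects_oqRel_iff (f : F →ₐ[R] A) :
    (∀ ⦃x y⦄, OqRel x y → f x = f y) ↔ OqSL2Relations (f ja) (f jb) (f jc) (f jd) := by
  constructor
  · intro h
    have hca := h .ca; have hdb := h .db; have hba := h .ba; have hdc := h .dc
    have hbc := h .bc; have hdet1 := h .det1; have hdet2 := h .det2
    simp only [map_mul, map_sub, map_one, map_fs, smul_one_mul] at hca hdb hba hdc hbc hdet1 hdet2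
    exact ⟨hca, hdb, hba, hdc, hbc, hdet1, hdet2⟩
  · intro h x y hxy
    cases hxy <;> simp only [map_mul, map_sub, map_one, map_fs, smul_one_mul]
    exacts [h.ca, h.db, h.ba, h.dc, h.bc, h.det1, h.det2]

theorem respects_mRel_iff (f : F →ₐ[R] A) :
    (∀ ⦃x y⦄, MRel x y → f x = f y) ↔ MatrixRelations (f ja) (f jb) (f jc) (f jd) := by
  constructor
  · intro h
    have r1pp := h .r1pp; have r1pm := h .r1pm; have r1mp := h .r1mp; have r1mm := h .r1mm
    have r2pp := h .r2pp; have r2pm := h .r2pm; have r2mp := h .r2mp; have r2mm := h .r2mm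
    simp only [map_mul, map_sub, map_neg, map_zero, map_fs, smul_one_mul]
      at r1pp r1pm r1mp r1mm r2pp r2pm r2mp r2mm
    exact ⟨r1pp, r1pm, r1mp, r1mm, r2pp, r2pm, r2mp, r2mm⟩
  · intro h x y hxy
    cases hxy <;> simp only [map_mul, map_sub, map_neg, map_zero, map_fs, smul_one_mul]
    exacts [h.r1pp, h.r1pm, h.r1mp, h.r1mm, h.r2pp, h.r2pm, h.r2mp, h.r2mm]

end Relations

/-- The algebra presented by the matrix relations `C = AᵗCA`, `C = ACAᵗ` is
isomorphic (as an `R`-algebra, matching generators) to `O_{q²}(SL₂)`. -/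
theorem matrix_presentation_iso :
    ∃ e : MAlg ≃ₐ[R] Oq, e ma = ga ∧ e mb = gb ∧ e mc = gc ∧ e md = gd := by
  have hOq : OqSL2Relations ga gb gc gd :=
    (respects_oqRel_iff _).1 fun _ _ h => RingQuot.mkAlgHom_rel R h
  have hM : MatrixRelations ma mb mc md :=
    (respects_mRel_iff _).1 fun _ _ h => RingQuot.mkAlgHom_rel R h
  refine ⟨RingQuot.algEquivOfRel
    ((respects_mRel_iff _).2 (matrixRelations_iff_oqSL2Relations.2 hOq))
    ((respects_oqRel_iff _).2 (matrixRelations_iff_oqSL2Relations.1 hM)), ?_, ?_, ?_, ?_⟩ <;>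
  exact RingQuot.algEquivOfRel_mkAlgHom _ _ _
end
end

section
/- Let U be a bialgebra over a commutative ring R with a bilinear form ρ : U ⊗ U → R satisfying the co-quasitriangularity axioms (existence of convolution-inverse ρ̄, the exchange relation Σ ρ(x''⊗y'') y'x' = Σ ρ(x'⊗y') x''y'', and the product-splitting relations for ρ(xy⊗z) and ρ(x⊗yz)). Let A be an R-algebra with two commuting right U-comodule-algebra structures Δ_1, Δ_2 (i.e. (Δ_1⊗id)∘Δ_2 = (id⊗fl)∘(Δ_2⊗id)∘Δ_1 where fl is the flip on U⊗U). Define a new product on A by x ∗ y = Σ x'y' ρ(u⊗v) where Δ_2(x) = Σ x'⊗u and Δ_1(y) = Σ y'⊗v. Then ∗ is associative. -/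
/-!
Write `x ∗ y = μ(Δ₂ x ⊗ Δ₁ y)` with `μ((a ⊗ u) ⊗ (b ⊗ v)) = ρ(u ⊗ v) • ab`. Since the coactions
are algebra maps, `Δ₂ (x ∗ y)` and `Δ₁ (y ∗ z)` are again products `μ` of coacted factors, and by
coassociativity of `Δ₁, Δ₂` and their commutation both triple products become, on elementary
tensors, scalars times `xyz`. The two scalars, `∑ ρ(w₁s ⊗ t) ρ(w₂ ⊗ r)` and
`∑ ρ(w ⊗ rt₁) ρ(s ⊗ t₂)`, agree because the splitting relations turn both into
`∑ ρ(w₁ ⊗ t₁) ρ(s ⊗ t₂) ρ(w₂ ⊗ r)`.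
-/

noncomputable section

open TensorProduct

/-- The comultiplication of the bialgebra `U`, as a linear map. -/
def comulU (R U : Type*) [CommRing R] [Ring U] [Bialgebra R U] :
    U →ₗ[R] U ⊗[R] U := Coalgebra.comul

/-- The counit of the bialgebra `U`, as a linear map. -/
def counitU (R U : Type*) [CommRing R] [Ring U] [Bialgebra R U] :
    U →ₗ[R] R := Coalgebra.counit

/-- `U ⊗ U →ₗ U`, `x' ⊗ x'' ↦ ε(x'') • x'`. -/
def pr1 (R U : Type*) [CommRing R] [Ring U] [Bialgebra R U] :
    U ⊗[R] U →ₗ[R] U :=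
  (TensorProduct.rid R U).toLinearMap ∘ₗ TensorProduct.map LinearMap.id (counitU R U)

/-- `U ⊗ U →ₗ U`, `x' ⊗ x'' ↦ ε(x') • x''`. -/
def pr2 (R U : Type*) [CommRing R] [Ring U] [Bialgebra R U] :
    U ⊗[R] U →ₗ[R] U :=
  (TensorProduct.lid R U).toLinearMap ∘ₗ TensorProduct.map (counitU R U) LinearMap.id

variable {R U A : Type*} [CommRing R] [Ring U] [Bialgebra R U]
  [Ring A] [Algebra R A]

/-- The braided (self-braided) product on `A`:
`x ∗ y = ∑ x'y' ρ(u ⊗ v)` where `Δ₂(x) = ∑ x' ⊗ u` and `Δ₁(y) = ∑ y' ⊗ v`. -/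
def braidedMul (Δ1 Δ2 : A →ₐ[R] A ⊗[R] U) (ρ : U ⊗[R] U →ₗ[R] R)
    (x y : A) : A :=
  (TensorProduct.rid R A)
    ((TensorProduct.map (LinearMap.mul' R A) ρ)
      ((TensorProduct.tensorTensorTensorComm R A U A U) ((Δ2 x) ⊗ₜ (Δ1 y))))

open Coalgebra

section PairingMul

variable {B C V : Type*} [Semiring B] [Algebra R B] [Semiring C] [Algebra R C]
  [AddCommMonoid V] [Module R V]

def pairingMul (ρ : V ⊗[R] V →ₗ[R] R) : (B ⊗[R] V) ⊗[R] (B ⊗[R] V) →ₗ[R] B :=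
  (TensorProduct.rid R B).toLinearMap ∘ₗ map (LinearMap.mul' R B) ρ ∘ₗ
    (tensorTensorTensorComm R B V B V).toLinearMap

@[simp]
lemma pairingMul_tmul (ρ : V ⊗[R] V →ₗ[R] R) (a b : B) (u v : V) :
    pairingMul ρ ((a ⊗ₜ u) ⊗ₜ (b ⊗ₜ v)) = ρ (u ⊗ₜ v) • (a * b) := by
  simp [pairingMul]

lemma AlgHom.map_pairingMul (f : B →ₐ[R] C) (ρ : V ⊗[R] V →ₗ[R] R) (s t : B ⊗[R] V) :
    f (pairingMul ρ (s ⊗ₜ t)) =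
      pairingMul ρ (map f.toLinearMap LinearMap.id s ⊗ₜ map f.toLinearMap LinearMap.id t) := by
  induction s using TensorProduct.induction_on with
  | zero => simp
  | add s₁ s₂ h₁ h₂ => simp only [add_tmul, map_add, h₁, h₂]
  | tmul a u =>
    induction t using TensorProduct.induction_on with
    | zero => simp
    | add t₁ t₂ h₁ h₂ => simp only [tmul_add, map_add, h₁, h₂]
    | tmul b v => simp

end PairingMul

lemma braidedMul_eq_pairingMul (Δ1 Δ2 : A →ₐ[R] A ⊗[R] U) (ρ : U ⊗[R] U →ₗ[R] R) (x y : A) :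
    braidedMul Δ1 Δ2 ρ x y = pairingMul ρ (Δ2 x ⊗ₜ Δ1 y) :=
  rfl

lemma rightComm_eq_assoc_symm_comm {M N P : Type*} [AddCommMonoid M] [Module R M]
    [AddCommMonoid N] [Module R N] [AddCommMonoid P] [Module R P] (v : (M ⊗[R] N) ⊗[R] P) :
    rightComm R M N P v = (TensorProduct.assoc R M P N).symm
      (map LinearMap.id (TensorProduct.comm R N P).toLinearMap (TensorProduct.assoc R M N P v)) := by
  rw [rightComm_def]
  rfl

lemma pr1_comul (u : U) : pr1 R U (comulU R U u) = u := by
  simp [pr1, comulU, counitU, ← LinearMap.lTensor_def]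

lemma pr2_comul (u : U) : pr2 R U (comulU R U u) = u := by
  simp [pr2, comulU, counitU, ← LinearMap.rTensor_def]

-- Sweedler notation `∑ t₁ ⊗ t₂` for `Δ t` is realised by the representation `ℛ R t` of `Δ t`.
def MulLeftSplits (ρ : U ⊗[R] U →ₗ[R] R) : Prop :=
  ∀ p s t : U, ρ ((p * s) ⊗ₜ t) =
    ∑ j ∈ (ℛ R t).index, ρ (p ⊗ₜ (ℛ R t).left j) * ρ (s ⊗ₜ (ℛ R t).right j)

def MulRightSplits (ρ : U ⊗[R] U →ₗ[R] R) : Prop :=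
  ∀ w r t : U, ρ (w ⊗ₜ (r * t)) =
    ∑ i ∈ (ℛ R w).index, ρ ((ℛ R w).left i ⊗ₜ t) * ρ ((ℛ R w).right i ⊗ₜ r)

section Splitting

variable {B : Type*} [Semiring B] [Algebra R B] {ρ : U ⊗[R] U →ₗ[R] R}

lemma sum_rho_mul_tmul_eq_sum_rho_tmul_mul (hl : MulLeftSplits ρ) (hr : MulRightSplits ρ)
    (w s r t : U) :
    ∑ i ∈ (ℛ R w).index, ρ (((ℛ R w).left i * s) ⊗ₜ t) * ρ ((ℛ R w).right i ⊗ₜ r) =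
      ∑ j ∈ (ℛ R t).index, ρ (w ⊗ₜ (r * (ℛ R t).left j)) * ρ (s ⊗ₜ (ℛ R t).right j) := by
  simp only [hl _ s t, hr w r, Finset.sum_mul]
  rw [Finset.sum_comm]
  exact Finset.sum_congr rfl fun _ _ => Finset.sum_congr rfl fun _ _ => by ring

lemma pairingMul_assoc_comul_tmul (hl : MulLeftSplits ρ) (hr : MulRightSplits ρ)
    (x y z : B) (w r s t : U) :
    pairingMul ρ (pairingMul ρ ((TensorProduct.assoc R B U U).symm
        (map LinearMap.id (comulU R U) (x ⊗ₜ w)) ⊗ₜ rightComm R B U U ((y ⊗ₜ r) ⊗ₜ s)) ⊗ₜ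
        (z ⊗ₜ t)) =
      pairingMul ρ ((x ⊗ₜ w) ⊗ₜ pairingMul ρ (((y ⊗ₜ r) ⊗ₜ s) ⊗ₜ
        (TensorProduct.assoc R B U U).symm (map LinearMap.id (comulU R U) (z ⊗ₜ t)))) := by
  simp only [map_tmul, LinearMap.id_coe, id_eq, rightComm_tmul, comulU, ← (ℛ R w).eq,
    ← (ℛ R t).eq, tmul_sum, sum_tmul, map_sum, assoc_symm_tmul, pairingMul_tmul,
    Algebra.TensorProduct.tmul_mul_tmul, smul_tmul', smul_mul_assoc, mul_smul_comm, smul_smul,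
    mul_assoc, ← Finset.sum_smul]
  rw [sum_rho_mul_tmul_eq_sum_rho_tmul_mul hl hr]

lemma pairingMul_assoc_comul (hl : MulLeftSplits ρ) (hr : MulRightSplits ρ)
    (a c : B ⊗[R] U) (b : (B ⊗[R] U) ⊗[R] U) :
    pairingMul ρ (pairingMul ρ ((TensorProduct.assoc R B U U).symm
        (map LinearMap.id (comulU R U) a) ⊗ₜ rightComm R B U U b) ⊗ₜ c) =
      pairingMul ρ (a ⊗ₜ pairingMul ρ (b ⊗ₜ
        (TensorProduct.assoc R B U U).symm (map LinearMap.id (comulU R U) c))) := by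
  induction a using TensorProduct.induction_on with
  | zero => simp
  | add a₁ a₂ h₁ h₂ => simp only [map_add, add_tmul, h₁, h₂]
  | tmul x w => ?_
  induction c using TensorProduct.induction_on with
  | zero => simp
  | add c₁ c₂ h₁ h₂ => simp only [map_add, tmul_add, h₁, h₂]
  | tmul z t => ?_
  induction b using TensorProduct.induction_on with
  | zero => simp
  | add b₁ b₂ h₁ h₂ => simp only [map_add, add_tmul, tmul_add, h₁, h₂]
  | tmul yr s => ?_
  induction yr using TensorProduct.induction_on with
  | zero => simp
  | add b₁ b₂ h₁ h₂ => simp only [map_add, add_tmul, tmul_add, h₁, h₂]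
  | tmul y r => exact pairingMul_assoc_comul_tmul hl hr x y z w r s t

end Splitting

theorem braidedMul_assoc_general
    (Δ1 Δ2 : A →ₐ[R] A ⊗[R] U) (ρ : U ⊗[R] U →ₗ[R] R)
    -- `Δ₁` is a comodule structure
    (h1coassoc : ∀ x : A,
      (TensorProduct.assoc R A U U)
          ((TensorProduct.map Δ1.toLinearMap LinearMap.id) (Δ1 x)) =
        (TensorProduct.map LinearMap.id (comulU R U)) (Δ1 x))
    -- `Δ₂` is a comodule structure
    (h2coassoc : ∀ x : A,
      (TensorProduct.assoc R A U U)
          ((TensorProduct.map Δ2.toLinearMap LinearMap.id) (Δ2 x)) =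
        (TensorProduct.map LinearMap.id (comulU R U)) (Δ2 x))
    -- the two coactions commute: `(Δ₁⊗id)∘Δ₂ = (id⊗fl)∘(Δ₂⊗id)∘Δ₁`
    (hcomm : ∀ x : A,
      (TensorProduct.assoc R A U U)
          ((TensorProduct.map Δ1.toLinearMap LinearMap.id) (Δ2 x)) =
        (TensorProduct.map LinearMap.id (TensorProduct.comm R U U).toLinearMap)
          ((TensorProduct.assoc R A U U)
            ((TensorProduct.map Δ2.toLinearMap LinearMap.id) (Δ1 x))))
    -- the product-splitting relation `ρ(xy⊗z) = ∑ ρ(x'⊗z')ρ(y''⊗z'')ε(x'')ε(y')`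
    (hsplit1 : ∀ x y z : U,
      ρ ((x * y) ⊗ₜ z) =
        LinearMap.mul' R R ((TensorProduct.map ρ ρ)
          ((TensorProduct.tensorTensorTensorComm R U U U U)
            (((pr1 R U (comulU R U x)) ⊗ₜ (pr2 R U (comulU R U y))) ⊗ₜ
              (comulU R U z)))))
    -- the product-splitting relation `ρ(x⊗yz) = ∑ ρ(x'⊗z')ρ(x''⊗y'')ε(z'')ε(y')`
    (hsplit2 : ∀ x y z : U,
      ρ (x ⊗ₜ (y * z)) =
        LinearMap.mul' R R ((TensorProduct.map ρ ρ)
          ((TensorProduct.tensorTensorTensorComm R U U U U)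
            ((TensorProduct.map LinearMap.id (TensorProduct.comm R U U).toLinearMap)
              ((comulU R U x) ⊗ₜ
                ((pr2 R U (comulU R U y)) ⊗ₜ (pr1 R U (comulU R U z)))))))) :
    ∀ x y z : A,
      braidedMul Δ1 Δ2 ρ (braidedMul Δ1 Δ2 ρ x y) z =
        braidedMul Δ1 Δ2 ρ x (braidedMul Δ1 Δ2 ρ y z) := by
  intro x y z
  have hl : MulLeftSplits ρ := by
    intro p s t
    rw [hsplit1, pr1_comul, pr2_comul, comulU, ← (ℛ R t).eq]
    simp [tmul_sum]
  have hr : MulRightSplits ρ := by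
    intro w r t
    rw [hsplit2, pr1_comul, pr2_comul, comulU, ← (ℛ R w).eq]
    simp [sum_tmul]
  have hx := (LinearEquiv.eq_symm_apply _).2 (h2coassoc x)
  have hz := (LinearEquiv.eq_symm_apply _).2 (h1coassoc z)
  have hy : map Δ2.toLinearMap LinearMap.id (Δ1 y) =
      rightComm R A U U (map Δ1.toLinearMap LinearMap.id (Δ2 y)) := by
    rw [rightComm_eq_assoc_symm_comm, hcomm, ← LinearMap.comp_apply, ← map_comp]
    simp
  simp only [braidedMul_eq_pairingMul, AlgHom.map_pairingMul, hx, hy, hz]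
  exact pairingMul_assoc_comul hl hr _ _ _

/-- If `A` carries two commuting right `U`-comodule-algebra structures `Δ₁, Δ₂` over a
cobraided (dual quasitriangular) bialgebra `U` with co-R-matrix `ρ`, then the braided
product `x ∗ y = ∑ x'y' ρ(u⊗v)` is associative. -/
theorem braidedMul_assoc
    (Δ1 Δ2 : A →ₐ[R] A ⊗[R] U) (ρ : U ⊗[R] U →ₗ[R] R)
    -- `Δ₁` is a comodule structure
    (h1coassoc : ∀ x : A,
      (TensorProduct.assoc R A U U)
          ((TensorProduct.map Δ1.toLinearMap LinearMap.id) (Δ1 x)) =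
        (TensorProduct.map LinearMap.id (comulU R U)) (Δ1 x))
    (h1counit : ∀ x : A,
      (TensorProduct.rid R A)
          ((TensorProduct.map LinearMap.id (counitU R U)) (Δ1 x)) = x)
    -- `Δ₂` is a comodule structure
    (h2coassoc : ∀ x : A,
      (TensorProduct.assoc R A U U)
          ((TensorProduct.map Δ2.toLinearMap LinearMap.id) (Δ2 x)) =
        (TensorProduct.map LinearMap.id (comulU R U)) (Δ2 x))
    (h2counit : ∀ x : A,
      (TensorProduct.rid R A)
          ((TensorProduct.map LinearMap.id (counitU R U)) (Δ2 x)) = x)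
    -- the two coactions commute: `(Δ₁⊗id)∘Δ₂ = (id⊗fl)∘(Δ₂⊗id)∘Δ₁`
    (hcomm : ∀ x : A,
      (TensorProduct.assoc R A U U)
          ((TensorProduct.map Δ1.toLinearMap LinearMap.id) (Δ2 x)) =
        (TensorProduct.map LinearMap.id (TensorProduct.comm R U U).toLinearMap)
          ((TensorProduct.assoc R A U U)
            ((TensorProduct.map Δ2.toLinearMap LinearMap.id) (Δ1 x))))
    -- `ρ` has a convolution inverse `ρ'`
    (hinv : ∃ ρ' : U ⊗[R] U →ₗ[R] R, ∀ x y : U,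
      (LinearMap.mul' R R ((TensorProduct.map ρ ρ')
          ((TensorProduct.tensorTensorTensorComm R U U U U)
            ((comulU R U x) ⊗ₜ (comulU R U y)))) =
        counitU R U x * counitU R U y) ∧
      (LinearMap.mul' R R ((TensorProduct.map ρ' ρ)
          ((TensorProduct.tensorTensorTensorComm R U U U U)
            ((comulU R U x) ⊗ₜ (comulU R U y)))) =
        counitU R U x * counitU R U y))
    -- the exchange relation `∑ ρ(x''⊗y'') y'x' = ∑ ρ(x'⊗y') x''y''`
    (hexch : ∀ x y : U,
      (TensorProduct.rid R U)
          ((TensorProduct.map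
              ((LinearMap.mul' R U) ∘ₗ (TensorProduct.comm R U U).toLinearMap) ρ)
            ((TensorProduct.tensorTensorTensorComm R U U U U)
              ((comulU R U x) ⊗ₜ (comulU R U y)))) =
        (TensorProduct.lid R U)
          ((TensorProduct.map ρ (LinearMap.mul' R U))
            ((TensorProduct.tensorTensorTensorComm R U U U U)
              ((comulU R U x) ⊗ₜ (comulU R U y)))))
    -- the product-splitting relation `ρ(xy⊗z) = ∑ ρ(x'⊗z')ρ(y''⊗z'')ε(x'')ε(y')`
    (hsplit1 : ∀ x y z : U,
      ρ ((x * y) ⊗ₜ z) =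
        LinearMap.mul' R R ((TensorProduct.map ρ ρ)
          ((TensorProduct.tensorTensorTensorComm R U U U U)
            (((pr1 R U (comulU R U x)) ⊗ₜ (pr2 R U (comulU R U y))) ⊗ₜ
              (comulU R U z)))))
    -- the product-splitting relation `ρ(x⊗yz) = ∑ ρ(x'⊗z')ρ(x''⊗y'')ε(z'')ε(y')`
    (hsplit2 : ∀ x y z : U,
      ρ (x ⊗ₜ (y * z)) =
        LinearMap.mul' R R ((TensorProduct.map ρ ρ)
          ((TensorProduct.tensorTensorTensorComm R U U U U)
            ((TensorProduct.map LinearMap.id (TensorProduct.comm R U U).toLinearMap)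
              ((comulU R U x) ⊗ₜ
                ((pr2 R U (comulU R U y)) ⊗ₜ (pr1 R U (comulU R U z)))))))) :
    ∀ x y z : A,
      braidedMul Δ1 Δ2 ρ (braidedMul Δ1 Δ2 ρ x y) z =
        braidedMul Δ1 Δ2 ρ x (braidedMul Δ1 Δ2 ρ y z) :=
  braidedMul_assoc_general Δ1 Δ2 ρ h1coassoc h2coassoc hcomm hsplit1 hsplit2
end
end

section
/- In the setting of the self-braided product: with U a cobraided bialgebra with co-R-matrix ρ and A an algebra with two commuting right U-comodule-algebra structures Δ_1, Δ_2, define the coaction Δ̲(x) = Σ x' ⊗ u_1 u_2 where (Δ_1 then Δ_2 applied, giving) Δ_{12}(x) = Σ x' ⊗ u_1 ⊗ u_2, and the product x ∗ y = Σ x'y' ρ(u⊗v) with Δ_2(x)=Σ x'⊗u, Δ_1(y)=Σ y'⊗v. Then Δ̲ is an algebra homomorphism with respect to ∗: Δ̲(x ∗ y) = Δ̲(x) ∗ Δ̲(y), where on A ⊗ U the product uses ∗ on the A factor and multiplication on U. -/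
/-!
Write `Δ₁₂ = (Δ₁ ⊗ id) ∘ Δ₂`, an algebra map `A → A ⊗ U ⊗ U` with `Δ̲ = (id ⊗ mul) ∘ Δ₁₂`, and
`Δ₁₂ x = x₀ ⊗ x₁ ⊗ x₂` in Sweedler notation. Since `Δ₁₂` is multiplicative, coassociativity of
`Δ₂` and of `Δ₁`, together with the commutation of the two coactions, give
`Δ̲(x ∗ y) = ∑ x₀y₀ ⊗ x₁ y₁' x₂' y₂ ρ(x₂'' ⊗ y₁'')` and
`Δ̲(x) ∗ Δ̲(y) = ∑ x₀y₀ ⊗ x₁ x₂'' y₁'' y₂ ρ(x₂' ⊗ y₁')`.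
The middle factors agree by the exchange axiom `∑ ρ(u'' ⊗ v'') v'u' = ∑ ρ(u' ⊗ v') u''v''`
for `u = x₂`, `v = y₁`.
-/

noncomputable section

open TensorProduct

variable {R U A : Type*} [CommRing R] [Ring U] [Bialgebra R U]
  [Ring A] [Algebra R A]

/-- The braided product, as a linear map `A ⊗ A →ₗ A`. -/
def braidedMulLM (Δ1 Δ2 : A →ₐ[R] A ⊗[R] U) (ρ : U ⊗[R] U →ₗ[R] R) :
    A ⊗[R] A →ₗ[R] A :=
  (TensorProduct.rid R A).toLinearMap ∘ₗ
    (TensorProduct.map (LinearMap.mul' R A) ρ) ∘ₗ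
    (TensorProduct.tensorTensorTensorComm R A U A U).toLinearMap ∘ₗ
    (TensorProduct.map Δ2.toLinearMap Δ1.toLinearMap)

/-- The combined coaction `Δ̲(x) = ∑ x' ⊗ u₁u₂`, where
`Δ₁₂(x) = ∑ x' ⊗ u₁ ⊗ u₂` is the common value of the two commuting coactions. -/
def coactD (Δ1 Δ2 : A →ₐ[R] A ⊗[R] U) (x : A) : A ⊗[R] U :=
  (TensorProduct.map LinearMap.id (LinearMap.mul' R U))
    ((TensorProduct.assoc R A U U)
      ((TensorProduct.map Δ1.toLinearMap LinearMap.id) (Δ2 x)))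

open LinearMap
open TensorProduct (assoc rid lid comm rightComm)

section TwistedMul

variable {R A B U : Type*} [CommSemiring R] [Semiring A] [Algebra R A] [Semiring B] [Algebra R B]
  [AddCommMonoid U] [Module R U] (ρ : U ⊗[R] U →ₗ[R] R)

def twistedMul : (A ⊗[R] U) ⊗[R] (A ⊗[R] U) →ₗ[R] A :=
  (rid R A).toLinearMap ∘ₗ map (mul' R A) ρ ∘ₗ (tensorTensorTensorComm R A U A U).toLinearMap

@[simp]
lemma twistedMul_tmul (a b : A) (u v : U) :
    twistedMul ρ ((a ⊗ₜ u) ⊗ₜ (b ⊗ₜ v)) = ρ (u ⊗ₜ v) • (a * b) := by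
  simp [twistedMul]

lemma AlgHom.comp_twistedMul (f : A →ₐ[R] B) :
    f.toLinearMap ∘ₗ twistedMul ρ =
      twistedMul ρ ∘ₗ map (f.toLinearMap.rTensor U) (f.toLinearMap.rTensor U) := by
  ext; simp

end TwistedMul

section TailMul

variable {R M N U : Type*} [CommSemiring R] [AddCommMonoid M] [Module R M] [AddCommMonoid N]
  [Module R N] [Semiring U] [Algebra R U]

variable (R M U) in
def tailMul : (M ⊗[R] U) ⊗[R] U →ₗ[R] M ⊗[R] U :=
  (mul' R U).lTensor M ∘ₗ (assoc R M U U).toLinearMap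

@[simp]
lemma tailMul_tmul (m : M) (u v : U) : tailMul R M U ((m ⊗ₜ u) ⊗ₜ v) = m ⊗ₜ (u * v) := by
  simp [tailMul]

lemma rTensor_tailMul (f : M →ₗ[R] N) (z : (M ⊗[R] U) ⊗[R] U) :
    f.rTensor U (tailMul R M U z) = tailMul R N U ((f.rTensor U).rTensor U z) := by
  rw [← comp_apply, ← comp_apply (tailMul R N U)]
  congr 1
  ext; simp

end TailMul

section Coaction

variable {R U : Type*} [CommSemiring R] [AddCommMonoid U] [Module R U] (c : U →ₗ[R] U ⊗[R] U)
  {A M : Type*} [AddCommMonoid A] [Module R A] [AddCommMonoid M] [Module R M]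

variable (M) in
def cofreeCoaction : M ⊗[R] U →ₗ[R] (M ⊗[R] U) ⊗[R] U :=
  (assoc R M U U).symm.toLinearMap ∘ₗ c.lTensor M

lemma rTensor_rTensor_cofreeCoaction (f : A →ₗ[R] M) (z : A ⊗[R] U) :
    (f.rTensor U).rTensor U (cofreeCoaction c A z) = cofreeCoaction c M (f.rTensor U z) := by
  rw [← comp_apply, ← comp_apply (cofreeCoaction c M)]
  congr 1
  simp only [cofreeCoaction, coassoc_simps]

lemma rTensor_rTensor_rightComm (f : A →ₗ[R] M) (z : (A ⊗[R] U) ⊗[R] U) :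
    (f.rTensor U).rTensor U (rightComm R A U U z) =
      rightComm R M U U ((f.rTensor U).rTensor U z) := by
  rw [← LinearEquiv.coe_coe, ← comp_apply, ← LinearEquiv.coe_coe, ← comp_apply]
  congr 1
  ext; simp

variable {c}

lemma rTensor_comp_self_eq_of_coassoc {δ : A →ₗ[R] A ⊗[R] U}
    (h : ∀ x, assoc R A U U (map δ LinearMap.id (δ x)) = map LinearMap.id c (δ x)) :
    δ.rTensor U ∘ₗ δ = cofreeCoaction c A ∘ₗ δ := by
  ext x
  exact (LinearEquiv.eq_symm_apply _).mpr (h x)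

lemma rTensor_comp_eq_rightComm_of_commute {δ₁ δ₂ : A →ₗ[R] A ⊗[R] U}
    (h : ∀ x, assoc R A U U (map δ₁ LinearMap.id (δ₂ x)) =
      map LinearMap.id (comm R U U).toLinearMap (assoc R A U U (map δ₂ LinearMap.id (δ₁ x)))) :
    δ₂.rTensor U ∘ₗ δ₁ = (rightComm R A U U).toLinearMap ∘ₗ δ₁.rTensor U ∘ₗ δ₂ := by
  ext x
  have hx : rightComm R A U U (δ₂.rTensor U (δ₁ x)) = δ₁.rTensor U (δ₂ x) := by
    rw [TensorProduct.rightComm_def]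
    exact (LinearEquiv.symm_apply_eq _).mpr (h x).symm
  simp only [comp_apply, LinearEquiv.coe_coe, ← hx]
  exact ((rightComm R A U U).symm_apply_apply _).symm

lemma coassoc_rTensor_comp_apply {δ : A →ₗ[R] A ⊗[R] U}
    (hδ : δ.rTensor U ∘ₗ δ = cofreeCoaction c A ∘ₗ δ) (f : A →ₗ[R] M) (x : A) :
    (f.rTensor U ∘ₗ δ).rTensor U (δ x) = cofreeCoaction c M (f.rTensor U (δ x)) := by
  rw [rTensor_comp_apply, ← comp_apply (δ.rTensor U), hδ, comp_apply,
    rTensor_rTensor_cofreeCoaction]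

abbrev coact₁₂ (δ₁ δ₂ : A →ₗ[R] A ⊗[R] U) : A →ₗ[R] (A ⊗[R] U) ⊗[R] U :=
  δ₁.rTensor U ∘ₗ δ₂

variable {δ₁ δ₂ : A →ₗ[R] A ⊗[R] U}

lemma rTensor_coact₁₂_apply_coact₁ (h₁ : δ₁.rTensor U ∘ₗ δ₁ = cofreeCoaction c A ∘ₗ δ₁)
    (h₁₂ : δ₂.rTensor U ∘ₗ δ₁ = (rightComm R A U U).toLinearMap ∘ₗ coact₁₂ δ₁ δ₂) (y : A) :
    (coact₁₂ δ₁ δ₂).rTensor U (δ₁ y) =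
      rightComm R (A ⊗[R] U) U U ((cofreeCoaction c A).rTensor U (coact₁₂ δ₁ δ₂ y)) := by
  rw [rTensor_comp_apply, ← comp_apply (δ₂.rTensor U), h₁₂, comp_apply, LinearEquiv.coe_coe,
    rTensor_rTensor_rightComm, comp_apply, ← rTensor_comp_apply, h₁, rTensor_comp_apply]

lemma rTensor_rTensor_coact₂_coact₁₂ (h₂ : δ₂.rTensor U ∘ₗ δ₂ = cofreeCoaction c A ∘ₗ δ₂)
    (h₁₂ : δ₂.rTensor U ∘ₗ δ₁ = (rightComm R A U U).toLinearMap ∘ₗ coact₁₂ δ₁ δ₂) (x : A) :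
    (δ₂.rTensor U).rTensor U (coact₁₂ δ₁ δ₂ x) =
      (rightComm R A U U).toLinearMap.rTensor U
        (cofreeCoaction c (A ⊗[R] U) (coact₁₂ δ₁ δ₂ x)) := by
  rw [comp_apply, ← rTensor_comp_apply, h₁₂, rTensor_comp_apply, coassoc_rTensor_comp_apply h₂]

lemma rTensor_rTensor_coact₁_coact₁₂ (h₁ : δ₁.rTensor U ∘ₗ δ₁ = cofreeCoaction c A ∘ₗ δ₁)
    (y : A) :
    (δ₁.rTensor U).rTensor U (coact₁₂ δ₁ δ₂ y) =
      (cofreeCoaction c A).rTensor U (coact₁₂ δ₁ δ₂ y) := by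
  rw [comp_apply, ← rTensor_comp_apply, h₁, rTensor_comp_apply]

end Coaction

section Exchange

variable {R A U : Type*} [CommSemiring R] [Semiring A] [Algebra R A] [Semiring U] [Algebra R U]
  (ρ : U ⊗[R] U →ₗ[R] R)

lemma tailMul_twistedMul_tmul (a b : A) (p w : U) (d e : U ⊗[R] U) :
    tailMul R A U (twistedMul ρ ((assoc R (A ⊗[R] U) U U).symm ((a ⊗ₜ p) ⊗ₜ d) ⊗ₜ
      rightComm R (A ⊗[R] U) U U ((assoc R A U U).symm (b ⊗ₜ e) ⊗ₜ w))) =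
    (a * b) ⊗ₜ (p * rid R U (map (mul' R U ∘ₗ (comm R U U).toLinearMap) ρ
      (tensorTensorTensorComm R U U U U (d ⊗ₜ e))) * w) := by
  induction d using TensorProduct.induction_on with
  | zero => simp
  | add d₁ d₂ h₁ h₂ => simp only [map_add, tmul_add, add_tmul, mul_add, add_mul, h₁, h₂]
  | tmul u₁ u₂ =>
    induction e using TensorProduct.induction_on with
    | zero => simp
    | add e₁ e₂ h₁ h₂ => simp only [map_add, tmul_add, add_tmul, mul_add, add_mul, h₁, h₂]
    | tmul v₁ v₂ => simp [Algebra.TensorProduct.tmul_mul_tmul, smul_tmul', tmul_smul, mul_assoc]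

lemma map_twistedMul_tailMul_tmul (a b : A) (p w : U) (d e : U ⊗[R] U) :
    map (twistedMul ρ) (mul' R U) (tensorTensorTensorComm R (A ⊗[R] U) U (A ⊗[R] U) U
      (tailMul R (A ⊗[R] U) U ((rightComm R A U U).toLinearMap.rTensor U
          ((assoc R (A ⊗[R] U) U U).symm ((a ⊗ₜ p) ⊗ₜ d))) ⊗ₜ
        tailMul R (A ⊗[R] U) U ((assoc R A U U).symm (b ⊗ₜ e) ⊗ₜ w))) =
    (a * b) ⊗ₜ (p * lid R U (map ρ (mul' R U)
      (tensorTensorTensorComm R U U U U (d ⊗ₜ e))) * w) := by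
  induction d using TensorProduct.induction_on with
  | zero => simp
  | add d₁ d₂ h₁ h₂ => simp only [map_add, tmul_add, add_tmul, mul_add, add_mul, h₁, h₂]
  | tmul u₁ u₂ =>
    induction e using TensorProduct.induction_on with
    | zero => simp
    | add e₁ e₂ h₁ h₂ => simp only [map_add, tmul_add, add_tmul, mul_add, add_mul, h₁, h₂]
    | tmul v₁ v₂ => simp [smul_tmul', tmul_smul, mul_assoc]

lemma tailMul_twistedMul_map_cofreeCoaction {c : U →ₗ[R] U ⊗[R] U}
    (hexch : ∀ u v : U,
      rid R U (map (mul' R U ∘ₗ (comm R U U).toLinearMap) ρ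
        (tensorTensorTensorComm R U U U U (c u ⊗ₜ c v))) =
      lid R U (map ρ (mul' R U) (tensorTensorTensorComm R U U U U (c u ⊗ₜ c v)))) :
    tailMul R A U ∘ₗ twistedMul ρ ∘ₗ
      map (cofreeCoaction c (A ⊗[R] U))
        ((rightComm R (A ⊗[R] U) U U).toLinearMap ∘ₗ (cofreeCoaction c A).rTensor U) =
    map (twistedMul ρ) (mul' R U) ∘ₗ
      (tensorTensorTensorComm R (A ⊗[R] U) U (A ⊗[R] U) U).toLinearMap ∘ₗ
      map (tailMul R (A ⊗[R] U) U ∘ₗ (rightComm R A U U).toLinearMap.rTensor U ∘ₗ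
          cofreeCoaction c (A ⊗[R] U))
        (tailMul R (A ⊗[R] U) U ∘ₗ (cofreeCoaction c A).rTensor U) := by
  ext a p u b q w
  simp only [AlgebraTensorModule.curry_apply, curry_apply, restrictScalars_self, comp_apply,
    map_tmul, lTensor_tmul, rTensor_tmul, LinearEquiv.coe_coe, cofreeCoaction]
  rw [tailMul_twistedMul_tmul, map_twistedMul_tailMul_tmul, hexch]

end Exchange

section BraidedProduct

variable (Δ1 Δ2 : A →ₐ[R] A ⊗[R] U) (ρ : U ⊗[R] U →ₗ[R] R)

lemma coactD_eq_tailMul (x : A) :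
    coactD Δ1 Δ2 x = tailMul R A U (coact₁₂ Δ1.toLinearMap Δ2.toLinearMap x) := rfl

lemma coactD_braidedMulLM_tmul (x y : A) :
    coactD Δ1 Δ2 (braidedMulLM Δ1 Δ2 ρ (x ⊗ₜ y)) =
      tailMul R A U (twistedMul ρ
        ((coact₁₂ Δ1.toLinearMap Δ2.toLinearMap).rTensor U (Δ2.toLinearMap x) ⊗ₜ
          (coact₁₂ Δ1.toLinearMap Δ2.toLinearMap).rTensor U (Δ1.toLinearMap y))) :=
  congr_arg (tailMul R A U) <| DFunLike.congr_fun
    (AlgHom.comp_twistedMul ρ ((Algebra.TensorProduct.map Δ1 (AlgHom.id R U)).comp Δ2))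
    (Δ2 x ⊗ₜ Δ1 y)

lemma map_braidedMulLM_tensorTensorTensorComm_tmul (s t : A ⊗[R] U) :
    map (braidedMulLM Δ1 Δ2 ρ) (mul' R U) (tensorTensorTensorComm R A U A U (s ⊗ₜ t)) =
      map (twistedMul ρ) (mul' R U) (tensorTensorTensorComm R (A ⊗[R] U) U (A ⊗[R] U) U
        (Δ2.toLinearMap.rTensor U s ⊗ₜ Δ1.toLinearMap.rTensor U t)) := by
  suffices h : map (braidedMulLM Δ1 Δ2 ρ) (mul' R U) ∘ₗ
      (tensorTensorTensorComm R A U A U).toLinearMap =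
      map (twistedMul ρ) (mul' R U) ∘ₗ
        (tensorTensorTensorComm R (A ⊗[R] U) U (A ⊗[R] U) U).toLinearMap ∘ₗ
          map (Δ2.toLinearMap.rTensor U) (Δ1.toLinearMap.rTensor U) from
    DFunLike.congr_fun h (s ⊗ₜ t)
  ext
  simp [braidedMulLM, twistedMul]

end BraidedProduct

theorem coactD_mul_general
    (Δ1 Δ2 : A →ₐ[R] A ⊗[R] U) (ρ : U ⊗[R] U →ₗ[R] R)
    (h1coassoc : ∀ x : A,
      (TensorProduct.assoc R A U U)
          ((TensorProduct.map Δ1.toLinearMap LinearMap.id) (Δ1 x)) =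
        (TensorProduct.map LinearMap.id (comulU R U)) (Δ1 x))
    (h2coassoc : ∀ x : A,
      (TensorProduct.assoc R A U U)
          ((TensorProduct.map Δ2.toLinearMap LinearMap.id) (Δ2 x)) =
        (TensorProduct.map LinearMap.id (comulU R U)) (Δ2 x))
    (hcomm : ∀ x : A,
      (TensorProduct.assoc R A U U)
          ((TensorProduct.map Δ1.toLinearMap LinearMap.id) (Δ2 x)) =
        (TensorProduct.map LinearMap.id (TensorProduct.comm R U U).toLinearMap)
          ((TensorProduct.assoc R A U U)
            ((TensorProduct.map Δ2.toLinearMap LinearMap.id) (Δ1 x))))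
    (hexch : ∀ x y : U,
      (TensorProduct.rid R U)
          ((TensorProduct.map
              ((LinearMap.mul' R U) ∘ₗ (TensorProduct.comm R U U).toLinearMap) ρ)
            ((TensorProduct.tensorTensorTensorComm R U U U U)
              ((comulU R U x) ⊗ₜ (comulU R U y)))) =
        (TensorProduct.lid R U)
          ((TensorProduct.map ρ (LinearMap.mul' R U))
            ((TensorProduct.tensorTensorTensorComm R U U U U)
              ((comulU R U x) ⊗ₜ (comulU R U y))))) :
    ∀ x y : A,
      coactD Δ1 Δ2 (braidedMulLM Δ1 Δ2 ρ (x ⊗ₜ y)) =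
        (TensorProduct.map (braidedMulLM Δ1 Δ2 ρ) (LinearMap.mul' R U))
          ((TensorProduct.tensorTensorTensorComm R A U A U)
            ((coactD Δ1 Δ2 x) ⊗ₜ (coactD Δ1 Δ2 y))) := by
  intro x y
  have h₁ := rTensor_comp_self_eq_of_coassoc (δ := Δ1.toLinearMap) h1coassoc
  have h₂ := rTensor_comp_self_eq_of_coassoc (δ := Δ2.toLinearMap) h2coassoc
  have h₁₂ := rTensor_comp_eq_rightComm_of_commute
    (δ₁ := Δ1.toLinearMap) (δ₂ := Δ2.toLinearMap) hcomm
  rw [coactD_braidedMulLM_tmul, coassoc_rTensor_comp_apply h₂,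
    rTensor_coact₁₂_apply_coact₁ h₁ h₁₂, map_braidedMulLM_tensorTensorTensorComm_tmul,
    coactD_eq_tailMul, coactD_eq_tailMul, rTensor_tailMul, rTensor_tailMul,
    rTensor_rTensor_coact₂_coact₁₂ h₂ h₁₂, rTensor_rTensor_coact₁_coact₁₂ h₁]
  exact DFunLike.congr_fun (tailMul_twistedMul_map_cofreeCoaction ρ hexch)
    (coact₁₂ Δ1.toLinearMap Δ2.toLinearMap x ⊗ₜ coact₁₂ Δ1.toLinearMap Δ2.toLinearMap y)

/-- In the self-braided product setting, the combined coaction `Δ̲` is an algebra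
homomorphism for the braided product: `Δ̲(x ∗ y) = Δ̲(x) ∗ Δ̲(y)`, where the product
on `A ⊗ U` uses `∗` on the `A`-factor and multiplication on the `U`-factor. -/
theorem coactD_mul
    (Δ1 Δ2 : A →ₐ[R] A ⊗[R] U) (ρ : U ⊗[R] U →ₗ[R] R)
    (h1coassoc : ∀ x : A,
      (TensorProduct.assoc R A U U)
          ((TensorProduct.map Δ1.toLinearMap LinearMap.id) (Δ1 x)) =
        (TensorProduct.map LinearMap.id (comulU R U)) (Δ1 x))
    (h1counit : ∀ x : A,
      (TensorProduct.rid R A)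
          ((TensorProduct.map LinearMap.id (counitU R U)) (Δ1 x)) = x)
    (h2coassoc : ∀ x : A,
      (TensorProduct.assoc R A U U)
          ((TensorProduct.map Δ2.toLinearMap LinearMap.id) (Δ2 x)) =
        (TensorProduct.map LinearMap.id (comulU R U)) (Δ2 x))
    (h2counit : ∀ x : A,
      (TensorProduct.rid R A)
          ((TensorProduct.map LinearMap.id (counitU R U)) (Δ2 x)) = x)
    (hcomm : ∀ x : A,
      (TensorProduct.assoc R A U U)
          ((TensorProduct.map Δ1.toLinearMap LinearMap.id) (Δ2 x)) =
        (TensorProduct.map LinearMap.id (TensorProduct.comm R U U).toLinearMap)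
          ((TensorProduct.assoc R A U U)
            ((TensorProduct.map Δ2.toLinearMap LinearMap.id) (Δ1 x))))
    (hinv : ∃ ρ' : U ⊗[R] U →ₗ[R] R, ∀ x y : U,
      (LinearMap.mul' R R ((TensorProduct.map ρ ρ')
          ((TensorProduct.tensorTensorTensorComm R U U U U)
            ((comulU R U x) ⊗ₜ (comulU R U y)))) =
        counitU R U x * counitU R U y) ∧
      (LinearMap.mul' R R ((TensorProduct.map ρ' ρ)
          ((TensorProduct.tensorTensorTensorComm R U U U U)
            ((comulU R U x) ⊗ₜ (comulU R U y)))) =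
        counitU R U x * counitU R U y))
    (hexch : ∀ x y : U,
      (TensorProduct.rid R U)
          ((TensorProduct.map
              ((LinearMap.mul' R U) ∘ₗ (TensorProduct.comm R U U).toLinearMap) ρ)
            ((TensorProduct.tensorTensorTensorComm R U U U U)
              ((comulU R U x) ⊗ₜ (comulU R U y)))) =
        (TensorProduct.lid R U)
          ((TensorProduct.map ρ (LinearMap.mul' R U))
            ((TensorProduct.tensorTensorTensorComm R U U U U)
              ((comulU R U x) ⊗ₜ (comulU R U y)))))
    (hsplit1 : ∀ x y z : U,
      ρ ((x * y) ⊗ₜ z) =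
        LinearMap.mul' R R ((TensorProduct.map ρ ρ)
          ((TensorProduct.tensorTensorTensorComm R U U U U)
            (((pr1 R U (comulU R U x)) ⊗ₜ (pr2 R U (comulU R U y))) ⊗ₜ
              (comulU R U z)))))
    (hsplit2 : ∀ x y z : U,
      ρ (x ⊗ₜ (y * z)) =
        LinearMap.mul' R R ((TensorProduct.map ρ ρ)
          ((TensorProduct.tensorTensorTensorComm R U U U U)
            ((TensorProduct.map LinearMap.id (TensorProduct.comm R U U).toLinearMap)
              ((comulU R U x) ⊗ₜ
                ((pr2 R U (comulU R U y)) ⊗ₜ (pr1 R U (comulU R U z)))))))) :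
    ∀ x y : A,
      coactD Δ1 Δ2 (braidedMulLM Δ1 Δ2 ρ (x ⊗ₜ y)) =
        (TensorProduct.map (braidedMulLM Δ1 Δ2 ρ) (LinearMap.mul' R U))
          ((TensorProduct.tensorTensorTensorComm R A U A U)
            ((coactD Δ1 Δ2 x) ⊗ₜ (coactD Δ1 Δ2 y))) :=
  coactD_mul_general Δ1 Δ2 ρ h1coassoc h2coassoc hcomm hexch
end
end
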